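/- arXiv:math-ph/0408050 — 2 statements merged into one kernel-verified Lean document; each statement's English description precedes it below -/
import Mathlib

section
/- For any test function f ∈ 𝒮(ℝ), the limits lim_{ε→0⁺} ∫_ℝ f(κ)/(κ + iε) dκ and lim_{ε→0⁺} ∫_ℝ f(κ)/(κ - iε) dκ exist and their difference equals -2πi·f(0). -/
open MeasureTheory Set Filter Topology Complex ComplexConjugate

/-!
For `ε ≠ 0`, `log (κ + ε i)` is a smooth primitive of `1 / (κ + ε i)`, so integrating by parts
turns `∫ f κ / (κ + ε i)` into `-∫ f' κ log (κ + ε i)`. The logarithms are dominated, uniformly in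
`|ε| ≤ 1`, by `π + |κ| + |log κ|`, which is integrable against a Schwartz function, so dominated
convergence gives both limits: `log κ` from above and `conj (log κ)` from below the real axis.
These differ by `2π i` exactly for `κ < 0`, and `∫_{κ < 0} f' = f 0`.
-/

theorem Real.locallyIntegrable_log : LocallyIntegrable Real.log volume := fun x =>
  ⟨Icc (x - 1) (x + 1), Icc_mem_nhds (by linarith) (by linarith),
    (intervalIntegrable_iff_integrableOn_Icc_of_le (by linarith)).1
      intervalIntegral.intervalIntegrable_log'⟩

namespace SchwartzMap

variable {F : Type*} [NormedAddCommGroup F] [NormedSpace ℝ F]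

theorem integrable_norm_mul_of_isBigO (g : 𝓢(ℝ, F)) {h : ℝ → ℝ} (hh : LocallyIntegrable h volume)
    (hO : h =O[cocompact ℝ] id) : Integrable fun x => ‖g x‖ * h x := by
  have hdecay : Integrable fun x : ℝ => ‖g x‖ * x :=
    (g.integrable_pow_mul volume 1).mono' (by fun_prop) <| .of_forall fun x => by
      rw [norm_mul, norm_norm, pow_one, mul_comm]
  exact (hh.continuous_mul g.continuous.norm).integrable_of_isBigO_cocompact
    ((Asymptotics.isBigO_refl _ _).mul hO) (hdecay.integrableAtFilter _)

theorem integral_Iio_deriv [CompleteSpace F] (f : 𝓢(ℝ, F)) (a : ℝ) :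
    ∫ x in Iio a, deriv f x = f a := by
  rw [setIntegral_congr_set Iio_ae_eq_Iic]
  simpa using integral_Iic_of_hasDerivAt_of_tendsto f.continuous.continuousWithinAt
    (fun x _ => f.hasDerivAt x) (derivCLM ℝ F f).integrable.integrableOn
    (f.tendsto_cocompact.mono_left atBot_le_cocompact)

theorem integrable_norm_mul_pi_add_abs_add_abs_log (g : 𝓢(ℝ, F)) :
    Integrable fun κ => ‖g κ‖ * (Real.pi + |κ| + |Real.log κ|) := by
  refine g.integrable_norm_mul_of_isBigO
    (((continuous_const.add continuous_abs).locallyIntegrable).add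
      (Real.locallyIntegrable_log.mono (by fun_prop) (.of_forall fun κ => by simp)))
    (Asymptotics.IsBigO.of_bound (Real.pi + 2) ?_)
  filter_upwards [tendsto_norm_cocompact_atTop.eventually_ge_atTop 1] with κ hκ
  rw [Real.norm_eq_abs] at hκ
  have hlog : |Real.log κ| ≤ |κ| := by
    rw [← Real.log_abs, abs_of_nonneg (Real.log_nonneg hκ)]
    exact Real.log_le_self (abs_nonneg κ)
  rw [id, Real.norm_eq_abs, Real.norm_eq_abs, abs_of_nonneg (by positivity)]
  nlinarith [Real.pi_pos]

end SchwartzMap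

theorem norm_log_ofReal_add_mul_I_le {κ ε : ℝ} (hκ : κ ≠ 0) (hε : |ε| ≤ 1) :
    ‖log (κ + ε * I)‖ ≤ Real.pi + |κ| + |Real.log κ| := by
  set z : ℂ := κ + ε * I
  have hκz : |κ| ≤ ‖z‖ := by simpa [z] using abs_re_le_norm z
  have hzκ : ‖z‖ ≤ |κ| + 1 :=
    (norm_add_le _ _).trans (by simpa [Complex.norm_real] using hε)
  have hlog : |Real.log ‖z‖| ≤ |κ| + |Real.log κ| := by
    have hlow := Real.log_le_log (abs_pos.2 hκ) hκz
    have hup := Real.log_le_sub_one_of_pos ((abs_pos.2 hκ).trans_le hκz)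
    rw [Real.log_abs] at hlow
    rw [abs_le]
    constructor <;> linarith [neg_abs_le (Real.log κ), le_abs_self (Real.log κ), abs_nonneg κ]
  calc ‖log z‖ ≤ |(log z).re| + |(log z).im| := norm_le_abs_re_add_abs_im _
    _ = |Real.log ‖z‖| + |arg z| := by rw [log_re, log_im]
    _ ≤ Real.pi + |κ| + |Real.log κ| := by linarith [abs_arg_le_pi z]

theorem ae_norm_mul_log_ofReal_add_mul_I_le (g : ℝ → ℂ) {ε : ℝ} (hε : |ε| ≤ 1) :
    ∀ᵐ κ : ℝ, ‖g κ * log (κ + ε * I)‖ ≤ ‖g κ‖ * (Real.pi + |κ| + |Real.log κ|) := by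
  filter_upwards [Measure.ae_ne volume 0] with κ hκ
  rw [norm_mul]
  exact mul_le_mul_of_nonneg_left (norm_log_ofReal_add_mul_I_le hκ hε) (norm_nonneg _)

namespace SchwartzMap

theorem integrable_mul_log_ofReal_add_mul_I (g : 𝓢(ℝ, ℂ)) {ε : ℝ} (hε : |ε| ≤ 1) :
    Integrable fun κ : ℝ => g κ * log (κ + ε * I) :=
  g.integrable_norm_mul_pi_add_abs_add_abs_log.mono'
    (g.continuous.aestronglyMeasurable.mul (measurable_log.comp (by fun_prop)).aestronglyMeasurable)
    (ae_norm_mul_log_ofReal_add_mul_I_le g hε)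

theorem integral_div_ofReal_add_mul_I (f : 𝓢(ℝ, ℂ)) {ε : ℝ} (hε₀ : ε ≠ 0) (hε : |ε| ≤ 1) :
    ∫ κ : ℝ, f κ / (κ + ε * I) = -∫ κ : ℝ, deriv f κ * log (κ + ε * I) := by
  have hlog (κ : ℝ) : HasDerivAt (fun x : ℝ => log (x + ε * I)) (κ + ε * I)⁻¹ κ := by
    simpa using ((hasDerivAt_id κ).ofReal_comp.add_const (ε * I)).clog_real
      (by simp [mem_slitPlane_iff, hε₀])
  have hinv : Integrable fun κ : ℝ => f κ * (κ + ε * I)⁻¹ := by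
    refine (f.integrable.norm.mul_const |ε|⁻¹).mono' (by fun_prop) (.of_forall fun κ => ?_)
    rw [norm_mul, norm_inv]
    gcongr
    simpa using abs_im_le_norm ((κ : ℂ) + ε * I)
  simp_rw [div_eq_mul_inv]
  exact integral_mul_deriv_eq_deriv_mul_of_integrable (fun x _ => f.hasDerivAt x)
    (fun x _ => hlog x) hinv ((derivCLM ℝ ℂ f).integrable_mul_log_ofReal_add_mul_I hε)
    (f.integrable_mul_log_ofReal_add_mul_I hε)

theorem tendsto_integral_mul_log_ofReal_add_mul_I (g : 𝓢(ℝ, ℂ)) {l : Filter ℝ}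
    [l.IsCountablyGenerated] (hl : ∀ᶠ ε in l, |ε| ≤ 1) {L : ℝ → ℂ}
    (hL : ∀ᵐ κ : ℝ, Tendsto (fun ε : ℝ => log (κ + ε * I)) l (𝓝 (L κ))) :
    Tendsto (fun ε : ℝ => ∫ κ, g κ * log (κ + ε * I)) l (𝓝 (∫ κ, g κ * L κ)) :=
  tendsto_integral_filter_of_dominated_convergence _
    (hl.mono fun _ hε => (g.integrable_mul_log_ofReal_add_mul_I hε).aestronglyMeasurable)
    (hl.mono fun _ hε => ae_norm_mul_log_ofReal_add_mul_I_le g hε)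
    g.integrable_norm_mul_pi_add_abs_add_abs_log (hL.mono fun κ hκ => hκ.const_mul (g κ))

theorem tendsto_integral_div_ofReal_add_mul_I (f : 𝓢(ℝ, ℂ)) {l : Filter ℝ}
    [l.IsCountablyGenerated] (hl : l ≤ 𝓝[≠] 0) {L : ℝ → ℂ}
    (hL : ∀ᵐ κ : ℝ, Tendsto (fun ε : ℝ => log (κ + ε * I)) l (𝓝 (L κ))) :
    Tendsto (fun ε : ℝ => ∫ κ, f κ / (κ + ε * I)) l (𝓝 (-∫ κ, deriv f κ * L κ)) := by
  have hsmall : ∀ᶠ ε in l, ε ≠ 0 ∧ |ε| ≤ 1 :=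
    Eventually.mono (hl (inter_mem_nhdsWithin _ (Icc_mem_nhds (by norm_num : (-1 : ℝ) < 0)
      one_pos))) fun _ hε => ⟨hε.1, abs_le.2 hε.2⟩
  exact ((derivCLM ℝ ℂ f).tendsto_integral_mul_log_ofReal_add_mul_I (hsmall.mono fun _ h => h.2)
    hL).neg.congr' (hsmall.mono fun _ h => (f.integral_div_ofReal_add_mul_I h.1 h.2).symm)

end SchwartzMap

theorem tendsto_log_ofReal_add_mul_I_nhdsGT {κ : ℝ} (hκ : κ ≠ 0) :
    Tendsto (fun ε : ℝ => log (κ + ε * I)) (𝓝[>] 0) (𝓝 (log κ)) := by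
  have hcont : ContinuousWithinAt log {z : ℂ | 0 ≤ z.im} κ := by
    rcases hκ.lt_or_gt with hneg | hpos
    · exact continuousWithinAt_log_of_re_neg_of_im_zero (by simpa) (by simp)
    · exact (continuousAt_clog (by simp [mem_slitPlane_iff, hpos])).continuousWithinAt
  refine hcont.tendsto.comp (tendsto_nhdsWithin_iff.2 ⟨?_, ?_⟩)
  · have : Continuous fun ε : ℝ => (κ : ℂ) + ε * I := by fun_prop
    simpa using (this.tendsto 0).mono_left nhdsWithin_le_nhds
  · filter_upwards [self_mem_nhdsWithin] with ε (hε : 0 < ε)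
    simpa using hε.le

theorem tendsto_log_ofReal_add_mul_I_nhdsLT {κ : ℝ} (hκ : κ ≠ 0) :
    Tendsto (fun ε : ℝ => log (κ + ε * I)) (𝓝[<] 0) (𝓝 (conj (log κ))) := by
  have h := ((continuous_conj.tendsto _).comp (tendsto_log_ofReal_add_mul_I_nhdsGT hκ)).comp
    (neg_zero (G := ℝ) ▸ tendsto_neg_nhdsLT (a := (0 : ℝ)))
  refine h.congr' ?_
  filter_upwards [self_mem_nhdsWithin] with ε (hε : ε < 0)
  have harg : arg ((κ : ℂ) + (-ε : ℝ) * I) ≠ Real.pi := by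
    rw [Ne, arg_eq_pi_iff]; simp [hε.ne]
  rw [Function.comp_apply, Function.comp_apply, ← log_conj _ harg]
  simp [conj_ofReal]

theorem conj_log_ofReal (κ : ℝ) :
    conj (log κ) = log κ - (Iio 0).indicator (fun _ => 2 * Real.pi * I) κ := by
  rw [eq_sub_iff_add_eq, ← eq_sub_iff_add_eq', sub_conj, log_im]
  rcases lt_or_ge κ 0 with h | h
  · simp [arg_ofReal_of_neg h, h]
  · simp [arg_ofReal_of_nonneg h, not_lt.2 h]

theorem stmt_4 (f : SchwartzMap ℝ ℂ) :
    ∃ L₁ L₂ : ℂ,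
      Tendsto (fun ε : ℝ => ∫ κ : ℝ, f κ / ((κ : ℂ) + ε * Complex.I))
        (nhdsWithin 0 (Ioi 0)) (nhds L₁) ∧
      Tendsto (fun ε : ℝ => ∫ κ : ℝ, f κ / ((κ : ℂ) - ε * Complex.I))
        (nhdsWithin 0 (Ioi 0)) (nhds L₂) ∧
      L₁ - L₂ = -2 * Real.pi * Complex.I * f 0 := by
  have hlower := f.tendsto_integral_div_ofReal_add_mul_I (nhdsLT_le_nhdsNE 0)
    ((Measure.ae_ne volume 0).mono fun _ => tendsto_log_ofReal_add_mul_I_nhdsLT)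
  refine ⟨_, _, f.tendsto_integral_div_ofReal_add_mul_I (nhdsGT_le_nhdsNE 0)
    ((Measure.ae_ne volume 0).mono fun _ => tendsto_log_ofReal_add_mul_I_nhdsGT),
    (hlower.comp (neg_zero (G := ℝ) ▸ tendsto_neg_nhdsGT_neg)).congr fun ε => by
      simp [sub_eq_add_neg], ?_⟩
  have hlog : Integrable fun κ : ℝ => deriv f κ * log κ := by
    simpa using (SchwartzMap.derivCLM ℝ ℂ f).integrable_mul_log_ofReal_add_mul_I (ε := 0) (by simp)
  have hjump : Integrable ((Iio 0).indicator fun κ : ℝ => deriv f κ * (2 * Real.pi * I)) :=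
    ((SchwartzMap.derivCLM ℝ ℂ f).integrable.mul_const _).indicator measurableSet_Iio
  have hconj : ∫ κ : ℝ, deriv f κ * conj (log κ)
      = (∫ κ : ℝ, deriv f κ * log κ) - 2 * Real.pi * I * f 0 := by
    simp_rw [conj_log_ofReal, mul_sub, ← indicator_mul_right]
    rw [integral_sub hlog hjump, integral_indicator measurableSet_Iio, integral_mul_const,
      f.integral_Iio_deriv]
    ring
  rw [hconj]
  ring
end

section
/- Let w̃: ℝ → ℂ be continuously differentiable in a neighborhood of 0 with w̃(0) ≠ 0, and let φ: ℝ → ℝ be odd continuous with φ = id on [-1,1], 0 ≤ φ ≤ 2 on [0,∞), supp φ ⊆ [-2,2]. Define φ_n(κ) = φ(nκ)/w̃(κ) for n large enough that w̃ has no zeros on [-2/n, 2/n]. Then |lim_{ε→0⁺} ∫_ℝ φ_n(κ) w̃(κ)/(κ + iε) dκ| = |∫_ℝ φ(nκ)/κ dκ| ≥ 2 for all sufficiently large n. -/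
open MeasureTheory Set Filter Complex Topology

/-!
Where `w̃` does not vanish the integrand is `φ(nκ)/(κ + iε)`, and where it vanishes `φ(nκ) = 0`.
Since `φ` is the identity near `0`, the function `κ ↦ φ(nκ)/κ` is `n · dslope φ 0 (nκ)`, a
continuous compactly supported function, which dominates `|φ(nκ)/(κ + iε)|`; dominated convergence
gives the limit `∫ φ(nκ)/κ`, and rescaling turns it into `∫ dslope φ 0`, independent of `n`. That
integral is at least `2`, because `dslope φ 0 = φ(x)/x` is nonnegative for odd `φ ≥ 0` on
`[0, ∞)` and equals `1` on `[-1, 1]`.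
-/

lemma eventually_Icc_div_subset {S : Set ℝ} (hS : S ∈ 𝓝 0) (c : ℝ) :
    ∀ᶠ n : ℕ in atTop, Icc (-(c / n)) (c / n) ⊆ S := by
  obtain ⟨δ, hδ, hball⟩ := Metric.nhds_basis_closedBall.mem_iff.1 hS
  filter_upwards [(tendsto_const_div_atTop_nhds_zero_nat c).eventually_le_const hδ] with n hn
  refine (Icc_subset_Icc (neg_le_neg hn) hn).trans ?_
  simpa [Real.closedBall_eq_Icc] using hball

lemma mem_Icc_div_of_mul_mem_Icc {a c x : ℝ} (ha : 0 < a) (h : a * x ∈ Icc (-c) c) :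
    x ∈ Icc (-(c / a)) (c / a) := by
  rw [mem_Icc, ← abs_le, abs_mul, abs_of_pos ha] at h
  rw [mem_Icc, ← abs_le, le_div_iff₀ ha, mul_comm]
  exact h

lemma apply_div_nonneg_of_odd {φ : ℝ → ℝ} (hodd : ∀ x, φ (-x) = -φ x)
    (hnonneg : ∀ x, 0 ≤ x → 0 ≤ φ x) (x : ℝ) : 0 ≤ φ x / x := by
  rcases le_total 0 x with hx | hx
  · exact div_nonneg (hnonneg x hx) hx
  · have := hnonneg (-x) (neg_nonneg.2 hx)
    rw [hodd] at this
    exact div_nonneg_of_nonpos (by linarith) hx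

lemma integral_mul_comp_mul_left {F : Type*} [NormedAddCommGroup F] [NormedSpace ℝ F]
    (f : ℝ → F) {a : ℝ} (ha : 0 < a) : ∫ x, a • f (a * x) = ∫ x, f x := by
  rw [integral_smul, Measure.integral_comp_mul_left, abs_of_pos (inv_pos.2 ha), smul_smul,
    mul_inv_cancel₀ ha.ne', one_smul]

section dslope

variable {𝕜 E : Type*} [NontriviallyNormedField 𝕜] [NormedAddCommGroup E] [NormedSpace 𝕜 E]
  {f : 𝕜 → E} {a : 𝕜}

lemma Continuous.dslope (hf : Continuous f) (hfa : DifferentiableAt 𝕜 f a) :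
    Continuous (dslope f a) := by
  refine continuous_iff_continuousAt.2 fun b => ?_
  rcases eq_or_ne b a with rfl | hb
  · exact continuousAt_dslope_same.2 hfa
  · exact (continuousAt_dslope_of_ne hb).2 hf.continuousAt

lemma HasCompactSupport.dslope (hf : HasCompactSupport f) (hfa : f a = 0) :
    HasCompactSupport (dslope f a) := by
  refine HasCompactSupport.intro (hf.isCompact.union (isCompact_singleton (x := a))) fun b hb => ?_
  rw [mem_union, not_or, mem_singleton_iff] at hb
  rw [dslope_of_ne f hb.2, slope, vsub_eq_sub, image_eq_zero_of_notMem_tsupport hb.1, hfa,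
    sub_zero, smul_zero]

end dslope

lemma continuous_integral_div_add_mul_I {f : ℝ → ℂ} (hf : AEStronglyMeasurable f)
    (hint : Integrable fun x : ℝ => f x / x) :
    Continuous fun ε : ℝ => ∫ x : ℝ, f x / (x + ε * I) := by
  have hden : ∀ x : ℝ, x ≠ 0 → ∀ ε : ℝ, (x + ε * I : ℂ) ≠ 0 := fun x hx ε h => by
    simpa [hx] using congrArg re h
  refine continuous_of_dominated (bound := fun x => ‖f x / x‖) (fun ε => ?_) (fun ε => ?_)
    hint.norm ?_
  · simp_rw [div_eq_mul_inv]
    exact hf.mul (by fun_prop : Measurable fun x : ℝ => ((x : ℂ) + ε * I)⁻¹).aestronglyMeasurable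
  · filter_upwards [Measure.ae_ne volume 0] with x hx
    rw [norm_div, norm_div]
    refine div_le_div_of_nonneg_left (norm_nonneg _) (by simpa using hx) ?_
    simpa using abs_re_le_norm ((x : ℂ) + ε * I)
  · filter_upwards [Measure.ae_ne volume 0] with x hx
    exact continuous_const.div (by fun_prop) (hden x hx)

section IdentityNearZero

variable {φ : ℝ → ℝ}

lemma dslope_zero_of_eventuallyEq_id (hφ : φ =ᶠ[𝓝 0] id) (x : ℝ) :
    dslope φ 0 x = if x = 0 then 1 else φ x / x := by
  split_ifs with hx
  · rw [hx, dslope_same, hφ.deriv_eq, deriv_id]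
  · rw [dslope_of_ne φ hx, slope_def_field, hφ.eq_of_nhds, id, sub_zero, sub_zero]

lemma ite_div_eq_mul_dslope (hφ : φ =ᶠ[𝓝 0] id) {a : ℝ} (ha : a ≠ 0) (x : ℝ) :
    (if x = 0 then a else φ (a * x) / x) = a * dslope φ 0 (a * x) := by
  rw [dslope_zero_of_eventuallyEq_id hφ]
  by_cases hx : x = 0
  · simp [hx]
  · rw [if_neg hx, if_neg (mul_ne_zero ha hx)]
    field_simp

lemma integral_ite_div_eq_integral_dslope (hφ : φ =ᶠ[𝓝 0] id) {a : ℝ} (ha : 0 < a) :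
    ∫ x, (if x = 0 then a else φ (a * x) / x) = ∫ x, dslope φ 0 x := by
  simp_rw [ite_div_eq_mul_dslope hφ ha.ne', ← smul_eq_mul]
  exact integral_mul_comp_mul_left _ ha

lemma integrable_dslope_zero (hφ : φ =ᶠ[𝓝 0] id) (hc : Continuous φ) (hs : HasCompactSupport φ) :
    Integrable (dslope φ 0) :=
  (hc.dslope (differentiableAt_id.congr_of_eventuallyEq hφ)).integrable_of_hasCompactSupport
    (hs.dslope hφ.eq_of_nhds)

lemma tendsto_integral_comp_mul_div_add_mul_I (hφ : φ =ᶠ[𝓝 0] id) (hc : Continuous φ)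
    (hs : HasCompactSupport φ) {a : ℝ} (ha : 0 < a) :
    Tendsto (fun ε : ℝ => ∫ x : ℝ, (φ (a * x) : ℂ) / (x + ε * I)) (𝓝[>] 0)
      (𝓝 ↑(∫ x, dslope φ 0 x)) := by
  set g := fun x : ℝ => a * dslope φ 0 (a * x)
  have hg : Integrable g := ((integrable_dslope_zero hφ hc hs).comp_mul_left' ha.ne').const_mul a
  have hfg : (fun x : ℝ => (φ (a * x) : ℂ) / x) =ᵐ[volume] fun x => (g x : ℂ) := by
    filter_upwards [Measure.ae_ne volume 0] with x hx
    simp only [g, ← ite_div_eq_mul_dslope hφ ha.ne', if_neg hx]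
    push_cast
    rfl
  have hcont := continuous_integral_div_add_mul_I (f := fun x => (φ (a * x) : ℂ))
    (by fun_prop : Continuous _).aestronglyMeasurable (hg.ofReal.congr hfg.symm)
  have h0 : ∫ x : ℝ, (φ (a * x) : ℂ) / (x + (0 : ℝ) * I) = ↑(∫ x, dslope φ 0 x) := by
    simp only [ofReal_zero, zero_mul, add_zero]
    rw [integral_congr_ae hfg, integral_complex_ofReal]
    exact congrArg _ (integral_mul_comp_mul_left _ ha)
  exact h0 ▸ (hcont.tendsto 0).mono_left nhdsWithin_le_nhds

lemma two_le_integral_dslope_zero (hc : Continuous φ) (hs : HasCompactSupport φ)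
    (hodd : ∀ x, φ (-x) = -φ x) (hnonneg : ∀ x, 0 ≤ x → 0 ≤ φ x)
    (hid : ∀ x ∈ Icc (-1 : ℝ) 1, φ x = x) :
    2 ≤ ∫ x, dslope φ 0 x := by
  have hφ : φ =ᶠ[𝓝 0] id := eventually_of_mem (Icc_mem_nhds (by norm_num) (by norm_num)) hid
  have hone : EqOn (dslope φ 0) (fun _ => 1) (Icc (-1) 1) := fun x hx => by
    rw [dslope_zero_of_eventuallyEq_id hφ]
    split_ifs with h
    · rfl
    · rw [hid x hx, div_self h]
  have hpos : ∀ x, 0 ≤ dslope φ 0 x := fun x => by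
    rw [dslope_zero_of_eventuallyEq_id hφ]
    split_ifs
    · exact zero_le_one
    · exact apply_div_nonneg_of_odd hodd hnonneg x
  calc (2 : ℝ) = ∫ x in Icc (-1 : ℝ) 1, dslope φ 0 x := by
        rw [setIntegral_congr_fun measurableSet_Icc hone]
        norm_num
    _ ≤ ∫ x, dslope φ 0 x :=
        setIntegral_le_integral (integrable_dslope_zero hφ hc hs) (.of_forall hpos)

end IdentityNearZero

theorem stmt_6 (w' : ℝ → ℂ) (U : Set ℝ) (hU : IsOpen U) (hU0 : (0:ℝ) ∈ U)
    (hw : ContDiffOn ℝ 1 w' U) (hw0 : w' 0 ≠ 0)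
    (φ : ℝ → ℝ) (hodd : ∀ κ, φ (-κ) = -φ κ) (hcont : Continuous φ)
    (hid : ∀ κ ∈ Icc (-1:ℝ) 1, φ κ = κ)
    (hbd : ∀ κ : ℝ, 0 ≤ κ → 0 ≤ φ κ ∧ φ κ ≤ 2)
    (hsupp : Function.support φ ⊆ Icc (-2:ℝ) 2) :
    ∀ᶠ n : ℕ in atTop,
      (∀ κ ∈ Icc (-(2/(n:ℝ))) (2/(n:ℝ)), w' κ ≠ 0) ∧
      ∃ L : ℂ,
        Tendsto (fun ε : ℝ =>
            ∫ κ : ℝ, ((φ (n * κ) : ℂ) / w' κ) * (w' κ / ((κ : ℂ) + ε * Complex.I)))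
          (nhdsWithin 0 (Ioi 0)) (nhds L) ∧
        ‖L‖ = |∫ κ : ℝ, (if κ = 0 then (n : ℝ) else φ (n * κ) / κ)| ∧
        2 ≤ ‖L‖ := by
  have hφ : φ =ᶠ[𝓝 0] id := eventually_of_mem (Icc_mem_nhds (by norm_num) (by norm_num)) hid
  have hs : HasCompactSupport φ :=
    HasCompactSupport.intro isCompact_Icc fun x hx => Function.notMem_support.1 (mt (@hsupp x) hx)
  have hw_ne : w' ⁻¹' {0}ᶜ ∈ 𝓝 (0 : ℝ) :=
    (hw.continuousOn.continuousAt (hU.mem_nhds hU0)).preimage_mem_nhds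
      (isOpen_compl_singleton.mem_nhds hw0)
  filter_upwards [eventually_Icc_div_subset hw_ne 2, eventually_gt_atTop 0] with n hne hn
  have hn' : (0 : ℝ) < n := Nat.cast_pos.2 hn
  have hcancel : ∀ ε κ : ℝ, (φ (n * κ) : ℂ) / w' κ * (w' κ / (κ + ε * I)) =
      (φ (n * κ) : ℂ) / (κ + ε * I) := fun ε κ => by
    by_cases hφκ : φ (n * κ) = 0
    · simp [hφκ]
    · exact div_mul_div_cancel₀ (hne (mem_Icc_div_of_mul_mem_Icc hn' (hsupp hφκ)))
  refine ⟨hne, ((∫ x, dslope φ 0 x : ℝ) : ℂ), ?_, ?_, ?_⟩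
  · simpa only [hcancel] using tendsto_integral_comp_mul_div_add_mul_I hφ hcont hs hn'
  · rw [norm_real, Real.norm_eq_abs, integral_ite_div_eq_integral_dslope hφ hn']
  · rw [norm_real, Real.norm_eq_abs]
    exact (two_le_integral_dslope_zero hcont hs hodd (fun x hx => (hbd x hx).1) hid).trans
      (le_abs_self _)
end
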